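/- Let $a, b, c$ be real with $a + b > -1/2$ and $c > 0$, and let $t > 0$. Then $\int_0^t (t-x)^{c-1} x^{a-1} e^{-x/2} M_{a+c,\,b}(x)\,dx = \frac{\Gamma(c)\,\Gamma(a + b + 1/2)}{\Gamma(a + b + c + 1/2)}\, t^{a+c-1} e^{-t/2} M_{a,b}(t)$. -/

import Mathlib

/-!
Kummer's transformation `₁F₁(α; β; x) e⁻ˣ = ₁F₁(β - α; β; -x)`, which is the Chu–Vandermonde
identity for Pochhammer symbols read off the Cauchy product, turns
`x^(a-1) e^(-x/2) M_{a+c,b}(x)` into `x^(d-1) ₁F₁(d + c; 1 + 2b; -x)` with `d = a + b + 1/2 > 0`.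
Integrating this series term by term against `(t - x)^(c-1)` (dominated convergence) produces
Beta integrals, and `Γ(d + n) / Γ(d + c + n) = Γ(d) / Γ(d + c) · (d)ₙ / (d + c)ₙ` lowers the
upper parameter from `d + c` to `d`. Kummer's transformation read backwards then gives
`t^(a+c-1) e^(-t/2) M_{a,b}(t)`.
-/

open MeasureTheory Real Filter Set

/-- Kummer's confluent hypergeometric function ₁F₁(a; b; x). -/
noncomputable def hyp1F1 (a b x : ℝ) : ℝ :=
  ∑' n : ℕ, ((ascPochhammer ℝ n).eval a / (ascPochhammer ℝ n).eval b) * x ^ n / (n.factorial : ℝ)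

/-- The Whittaker M function. -/
noncomputable def whittakerM (a b x : ℝ) : ℝ :=
  x ^ (1/2 + b) * Real.exp (-x/2) * hyp1F1 (1/2 + b - a) (1 + 2*b) x

/-- The Whittaker W function, defined via the connection formula
`W_{a,b} = Γ(-2b)/Γ(1/2-b-a) M_{a,b} + Γ(2b)/Γ(1/2+b-a) M_{a,-b}`,
with exceptional parameter values handled by continuity in `b` (a limit). -/
noncomputable def whittakerW (a b x : ℝ) : ℝ :=
  limUnder (nhdsWithin b {b}ᶜ) (fun c =>
    Real.Gamma (-(2*c)) / Real.Gamma (1/2 - c - a) * whittakerM a c x +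
    Real.Gamma (2*c) / Real.Gamma (1/2 + c - a) * whittakerM a (-c) x)

/-- Speed density of the Shiryaev martingale. -/
noncomputable def speedm (x : ℝ) : ℝ := (2 / x^2) * Real.exp (-2/x)

open scoped Topology

theorem ascPochhammer_eval_ne_zero {R : Type*} [CommRing R] [IsDomain R] {r : R}
    (hr : ∀ k : ℕ, r ≠ -k) (n : ℕ) : (ascPochhammer R n).eval r ≠ 0 := by
  rw [Ne, ascPochhammer_eval_eq_zero_iff]
  rintro ⟨k, -, hk⟩
  exact hr k (by rw [hk, neg_neg])

theorem ascPochhammer_eval_add {S : Type*} [CommSemiring S] (r : S) (m n : ℕ) :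
    (ascPochhammer S (m + n)).eval r
      = (ascPochhammer S m).eval r * (ascPochhammer S n).eval (r + m) := by
  rw [← ascPochhammer_mul, Polynomial.eval_mul, Polynomial.eval_comp, Polynomial.eval_add,
    Polynomial.eval_X, Polynomial.eval_natCast]

open Finset in
theorem ascPochhammer_eval_sub_eq_sum_antidiagonal {R : Type*} [CommRing R] (x y : R) (n : ℕ) :
    (ascPochhammer R n).eval (y - x) = ∑ ij ∈ antidiagonal n,
      (n.choose ij.1 : R) * ((-1) ^ ij.1 * (ascPochhammer R ij.1).eval x) *
        (ascPochhammer R ij.2).eval (y + ij.1) := by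
  have hdesc (k : ℕ) (r : R) :
      (descPochhammer ℤ k).smeval r = (ascPochhammer R k).eval (r - k + 1) := by
    rw [Polynomial.descPochhammer_smeval_eq_ascPochhammer,
      Polynomial.ascPochhammer_smeval_eq_eval]
  -- `(y - x)ₙ` is the falling factorial of `-x + (y + n - 1)`, expanded by Chu–Vandermonde.
  have hvandermonde := Ring.descPochhammer_smeval_add n (Commute.all (-x) (y + n - 1))
  rw [hdesc, show -x + (y + n - 1) - n + 1 = y - x by ring] at hvandermonde
  rw [hvandermonde]
  refine sum_congr rfl fun ⟨i, j⟩ hij => ?_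
  rw [HasAntidiagonal.mem_antidiagonal] at hij
  subst hij
  have hneg := ascPochhammer_eval_neg_eq_descPochhammer R (-x) i
  rw [neg_neg, descPochhammer_eval_eq_ascPochhammer] at hneg
  rw [hdesc, hdesc, hneg, ← mul_assoc ((-1 : R) ^ i), ← pow_add, ← two_mul, pow_mul,
    neg_one_sq, one_pow, one_mul, show y + ((i + j : ℕ) : R) - 1 - j + 1 = y + i by push_cast; ring]
  ring

theorem Real.Gamma_add_nat_eq_mul_ascPochhammer {s : ℝ} (hs : ∀ k : ℕ, s ≠ -k) (n : ℕ) :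
    Gamma (s + n) = Gamma s * (ascPochhammer ℝ n).eval s := by
  induction n with
  | zero => simp
  | succ n ih =>
    have hsn : s + n ≠ 0 := fun h => hs n (eq_neg_of_add_eq_zero_left h)
    rw [Nat.cast_succ, ← add_assoc, Gamma_add_one hsn, ih, ascPochhammer_succ_eval]
    ring

noncomputable def hyp1F1Coeff (a b : ℝ) (n : ℕ) : ℝ :=
  (ascPochhammer ℝ n).eval a / (ascPochhammer ℝ n).eval b / n.factorial

theorem hyp1F1_eq_tsum (a b x : ℝ) : hyp1F1 a b x = ∑' n, hyp1F1Coeff a b n * x ^ n := by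
  simp only [hyp1F1, hyp1F1Coeff, div_mul_eq_mul_div]

-- Lean's `x / 0 = 0` makes this hold even when `(b)ₙ₊₁` vanishes.
theorem hyp1F1Coeff_succ (a b : ℝ) (n : ℕ) :
    hyp1F1Coeff a b (n + 1) = hyp1F1Coeff a b n * ((a + n) / (b + n) / (n + 1)) := by
  simp only [hyp1F1Coeff, ascPochhammer_succ_eval, Nat.factorial_succ, Nat.cast_mul,
    Nat.cast_succ, mul_div_mul_comm]
  ring

theorem summable_norm_hyp1F1Coeff_mul_pow (a b x : ℝ) :
    Summable fun n => ‖hyp1F1Coeff a b n * x ^ n‖ := by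
  have hratio : Tendsto (fun n : ℕ => (a + n) / (b + n) / (n + 1) * x) atTop (𝓝 0) := by
    have h1 : Tendsto (fun n : ℕ => (a + 1 * n) / (b + 1 * n)) atTop (𝓝 (1 / 1)) :=
      tendsto_add_mul_div_add_mul_atTop_nhds a b 1 one_ne_zero
    have h2 : Tendsto (fun n : ℕ => x / ((n : ℝ) + 1)) atTop (𝓝 0) := by
      simpa [div_eq_mul_inv] using tendsto_one_div_add_atTop_nhds_zero_nat.const_mul x
    have h := h1.mul h2
    simp only [one_mul, div_one] at h
    exact h.congr fun n => by ring
  refine summable_of_ratio_norm_eventually_le (r := 1 / 2) (by norm_num) ?_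
  filter_upwards [hratio.norm.eventually (ge_mem_nhds (by norm_num : ‖(0 : ℝ)‖ < 1 / 2))]
    with n hn
  rw [norm_norm, norm_norm, hyp1F1Coeff_succ, pow_succ,
    show ∀ p q r s : ℝ, p * q * (r * s) = p * r * (q * s) from fun _ _ _ _ => by ring,
    norm_mul _ (_ * x), mul_comm (1 / 2)]
  exact mul_le_mul_of_nonneg_left hn (norm_nonneg _)

open Finset in
theorem sum_antidiagonal_hyp1F1Coeff_mul_neg_one_pow_div_factorial {α β : ℝ}
    (hβ : ∀ k : ℕ, β ≠ -k) (n : ℕ) :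
    ∑ ij ∈ antidiagonal n, hyp1F1Coeff α β ij.1 * ((-1) ^ ij.2 / ij.2.factorial)
      = hyp1F1Coeff (β - α) β n * (-1) ^ n := by
  rw [hyp1F1Coeff, ascPochhammer_eval_sub_eq_sum_antidiagonal, sum_div, sum_div, sum_mul]
  refine sum_congr rfl fun ⟨i, j⟩ hij => ?_
  rw [HasAntidiagonal.mem_antidiagonal] at hij
  subst hij
  have hβi := ascPochhammer_eval_ne_zero hβ i
  have hβij := ascPochhammer_eval_ne_zero hβ (i + j)
  rw [ascPochhammer_eval_add] at hβij ⊢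
  have hβij' : (ascPochhammer ℝ j).eval (β + i) ≠ 0 := right_ne_zero_of_mul hβij
  have hchoose : ((i + j).choose i : ℝ) * i.factorial * j.factorial = (i + j).factorial := by
    exact_mod_cast Nat.choose_symm_add ▸ Nat.add_choose_mul_factorial_mul_factorial i j
  have hchoose_ne : ((i + j).choose i : ℝ) ≠ 0 :=
    Nat.cast_ne_zero.2 (Nat.choose_pos (Nat.le_add_right i j)).ne'
  have hsign : ((-1 : ℝ) ^ i) ^ 2 = 1 := by rw [← pow_mul, pow_mul', neg_one_sq, one_pow]
  simp only [hyp1F1Coeff]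
  rw [← hchoose]
  field_simp
  linear_combination -(ascPochhammer ℝ i).eval α * (-1) ^ j * hsign

theorem exp_neg_eq_tsum (x : ℝ) : exp (-x) = ∑' n : ℕ, (-1) ^ n / n.factorial * x ^ n := by
  rw [exp_eq_exp_ℝ, NormedSpace.exp_eq_tsum_div]
  simp only [neg_pow x, div_mul_eq_mul_div]

theorem summable_norm_neg_one_pow_div_factorial_mul_pow (x : ℝ) :
    Summable fun n : ℕ => ‖(-1) ^ n / n.factorial * x ^ n‖ :=
  (summable_pow_div_factorial |x|).congr fun n => by
    simp [norm_mul, norm_div, div_mul_eq_mul_div]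

open Finset in
/-- Kummer's transformation. -/
theorem hyp1F1_mul_exp_neg (α : ℝ) {β : ℝ} (hβ : ∀ k : ℕ, β ≠ -k) (x : ℝ) :
    hyp1F1 α β x * exp (-x) = hyp1F1 (β - α) β (-x) := by
  rw [hyp1F1_eq_tsum, hyp1F1_eq_tsum, exp_neg_eq_tsum,
    tsum_mul_tsum_eq_tsum_sum_antidiagonal_of_summable_norm
      (summable_norm_hyp1F1Coeff_mul_pow α β x)
      (summable_norm_neg_one_pow_div_factorial_mul_pow x)]
  refine tsum_congr fun n => ?_
  calc ∑ ij ∈ antidiagonal n, hyp1F1Coeff α β ij.1 * x ^ ij.1 *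
        ((-1) ^ ij.2 / ij.2.factorial * x ^ ij.2)
      = (∑ ij ∈ antidiagonal n, hyp1F1Coeff α β ij.1 * ((-1) ^ ij.2 / ij.2.factorial)) *
          x ^ n := by
        rw [sum_mul]
        refine sum_congr rfl fun ij hij => ?_
        rw [← HasAntidiagonal.mem_antidiagonal.1 hij, pow_add]
        ring
    _ = hyp1F1Coeff (β - α) β n * (-x) ^ n := by
        rw [sum_antidiagonal_hyp1F1Coeff_mul_neg_one_pow_div_factorial hβ, neg_pow]
        ring

theorem whittakerM_eq_hyp1F1_neg (a : ℝ) {b : ℝ} (hb : ∀ k : ℕ, 1 + 2 * b ≠ -k)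
    (x : ℝ) :
    whittakerM a b x = x ^ (1/2 + b) * exp (x/2) * hyp1F1 (1/2 + b + a) (1 + 2 * b) (-x) := by
  rw [whittakerM, show 1/2 + b + a = 1 + 2 * b - (1/2 + b - a) by ring,
    ← hyp1F1_mul_exp_neg _ hb, show -x / 2 = x / 2 + -x by ring, exp_add]
  ring

theorem rpow_mul_exp_mul_whittakerM {b : ℝ} (hb : ∀ k : ℕ, 1 + 2 * b ≠ -k) {x : ℝ}
    (hx : 0 < x) (s k : ℝ) :
    x ^ s * exp (-x/2) * whittakerM k b x
      = x ^ (s + b + 1/2) * hyp1F1 (1/2 + b + k) (1 + 2 * b) (-x) := by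
  have hexp : exp (-x/2) * exp (x/2) = 1 := by rw [← exp_add, neg_div, neg_add_cancel, exp_zero]
  rw [whittakerM_eq_hyp1F1_neg k hb, show s + b + 1/2 = s + (1/2 + b) by ring, rpow_add hx s]
  linear_combination x ^ s * x ^ (1/2 + b) * hyp1F1 (1/2 + b + k) (1 + 2 * b) (-x) * hexp

theorem integral_rpow_mul_rpow_sub {u v t : ℝ} (hu : 0 < u) (hv : 0 < v) (ht : 0 < t) :
    ∫ x in (0 : ℝ)..t, x ^ (u - 1) * (t - x) ^ (v - 1)
      = Gamma u * Gamma v / Gamma (u + v) * t ^ (u + v - 1) := by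
  have hbeta := Complex.betaIntegral_scaled u v ht
  rw [Complex.betaIntegral_eq_Gamma_mul_div _ _ (by simpa) (by simpa)] at hbeta
  have hreal : ∫ x in (0 : ℝ)..t, (x : ℂ) ^ ((u : ℂ) - 1) * ((t : ℂ) - x) ^ ((v : ℂ) - 1)
      = ((∫ x in (0 : ℝ)..t, x ^ (u - 1) * (t - x) ^ (v - 1) : ℝ) : ℂ) := by
    rw [← intervalIntegral.integral_ofReal]
    refine intervalIntegral.integral_congr fun x hx => ?_
    rw [uIcc_of_le ht.le] at hx
    simp only [Complex.ofReal_mul, Complex.ofReal_cpow hx.1,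
      Complex.ofReal_cpow (sub_nonneg.2 hx.2)]
    push_cast
    rfl
  rw [hreal] at hbeta
  apply Complex.ofReal_injective
  rw [hbeta]
  push_cast [Complex.ofReal_cpow ht.le, ← Complex.Gamma_ofReal]
  ring

theorem hasSum_integral_rpow_mul_rpow_sub_mul_tsum {a : ℕ → ℝ} {c d t : ℝ} (hc : 0 < c)
    (hd : 0 < d) (ht : 0 < t) (ha : Summable fun n => ‖a n‖ * t ^ n) :
    HasSum (fun n => a n * (Gamma (d + n) * Gamma c / Gamma (d + n + c) * t ^ (d + n + c - 1)))
      (∫ x in (0 : ℝ)..t, x ^ (d - 1) * (t - x) ^ (c - 1) * ∑' n, a n * x ^ n) := by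
  set w : ℝ → ℝ := fun x => x ^ (d - 1) * (t - x) ^ (c - 1)
  have hw : IntervalIntegrable w volume 0 t := by
    refine intervalIntegral.intervalIntegrable_of_integral_ne_zero ?_
    rw [integral_rpow_mul_rpow_sub hd hc ht]
    positivity
  have hterm (n : ℕ) : ∫ x in (0 : ℝ)..t, w x * (a n * x ^ n)
      = a n * (Gamma (d + n) * Gamma c / Gamma (d + n + c) * t ^ (d + n + c - 1)) := by
    rw [← integral_rpow_mul_rpow_sub (by positivity) hc ht,
      ← intervalIntegral.integral_const_mul]
    refine intervalIntegral.integral_congr_ae (ae_of_all _ fun x hx => ?_)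
    rw [uIoc_of_le ht.le] at hx
    rw [show d + n - 1 = (d - 1) + n by ring, rpow_add hx.1, rpow_natCast]
    ring
  have hbound : ∀ x ∈ uIoc (0 : ℝ) t, ∀ n, ‖a n * x ^ n‖ ≤ ‖a n‖ * t ^ n := by
    intro x hx n
    rw [uIoc_of_le ht.le] at hx
    rw [norm_mul, norm_pow, norm_of_nonneg hx.1.le]
    exact mul_le_mul_of_nonneg_left (pow_le_pow_left₀ hx.1.le hx.2 n) (norm_nonneg _)
  have hw_nonneg : ∀ x ∈ uIoc (0 : ℝ) t, 0 ≤ w x := by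
    intro x hx
    rw [uIoc_of_le ht.le] at hx
    have := sub_nonneg.2 hx.2
    have := hx.1.le
    positivity
  have hsum := intervalIntegral.hasSum_integral_of_dominated_convergence
    (F := fun n x => w x * (a n * x ^ n)) (f := fun x => w x * ∑' n, a n * x ^ n)
    (fun n x => ‖a n‖ * t ^ n * w x)
    (fun n => (by fun_prop : Measurable fun x => w x * (a n * x ^ n)).aestronglyMeasurable)
    (fun n => ae_of_all _ fun x hx => by
      rw [norm_mul, norm_of_nonneg (hw_nonneg x hx), mul_comm]
      exact mul_le_mul_of_nonneg_right (hbound x hx n) (hw_nonneg x hx))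
    (ae_of_all _ fun x _ => ha.mul_right _)
    (by simpa only [tsum_mul_right] using hw.const_mul _)
    (ae_of_all _ fun x hx =>
      ((ha.of_norm_bounded (hbound x hx)).hasSum).mul_left (w x))
  simpa only [hterm] using hsum

theorem integral_rpow_mul_rpow_sub_mul_hyp1F1_neg {c d t : ℝ} (hc : 0 < c) (hd : 0 < d)
    (ht : 0 < t) (β : ℝ) :
    ∫ x in (0 : ℝ)..t, x ^ (d - 1) * (t - x) ^ (c - 1) * hyp1F1 (d + c) β (-x)
      = Gamma d * Gamma c / Gamma (d + c) * t ^ (d + c - 1) * hyp1F1 d β (-t) := by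
  have hsum : Summable fun n => ‖hyp1F1Coeff (d + c) β n * (-1) ^ n‖ * t ^ n :=
    (summable_norm_hyp1F1Coeff_mul_pow (d + c) β t).congr fun n => by
      rw [norm_mul, norm_mul, norm_pow, norm_pow, norm_neg, norm_one, one_pow, mul_one,
        norm_of_nonneg ht.le]
  have h := hasSum_integral_rpow_mul_rpow_sub_mul_tsum hc hd ht hsum
  have hneg (x : ℝ) :
      hyp1F1 (d + c) β (-x) = ∑' n, hyp1F1Coeff (d + c) β n * (-1) ^ n * x ^ n := by
    simp_rw [hyp1F1_eq_tsum, neg_pow x, mul_assoc]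
  simp_rw [hneg]
  rw [← h.tsum_eq, hyp1F1_eq_tsum, ← tsum_mul_left]
  refine tsum_congr fun n => ?_
  have hpos (s : ℝ) (hs : 0 < s) (k : ℕ) : s ≠ -k := fun h => by
    linarith [h ▸ hs, (Nat.cast_nonneg k : (0 : ℝ) ≤ k)]
  have hΓd := Gamma_add_nat_eq_mul_ascPochhammer (hpos d hd) n
  have hΓdc := Gamma_add_nat_eq_mul_ascPochhammer (hpos (d + c) (by positivity)) n
  have hP := ascPochhammer_pos n (d + c) (by positivity)
  have hΓ := Gamma_pos_of_pos (add_pos hd hc)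
  rw [show d + n + c = d + c + n by ring, hΓd, hΓdc,
    show d + c + n - 1 = (d + c - 1) + n by ring, rpow_add ht, rpow_natCast]
  simp only [hyp1F1Coeff, neg_pow t]
  field_simp

/-- for `a+b > -1/2`, `c > 0`, `t > 0` (with `1+2b` not a nonpositive
integer), `∫_0^t (t-x)^{c-1} x^{a-1} e^{-x/2} M_{a+c,b}(x) dx
= Γ(c)Γ(a+b+1/2)/Γ(a+b+c+1/2) · t^{a+c-1} e^{-t/2} M_{a,b}(t)`. -/
theorem whittakerM_integral_identity (a b c t : ℝ)
    (hab : -(1/2) < a + b) (hc : 0 < c) (ht : 0 < t)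
    (hbeta : ∀ n : ℕ, 1 + 2*b ≠ -(n : ℝ)) :
    ∫ x in (0:ℝ)..t, (t - x) ^ (c - 1) * x ^ (a - 1) * Real.exp (-x/2) * whittakerM (a+c) b x
      = Real.Gamma c * Real.Gamma (a + b + 1/2) / Real.Gamma (a + b + c + 1/2) *
        t ^ (a + c - 1) * Real.exp (-t/2) * whittakerM a b t := by
  have hd : 0 < a + b + 1/2 := by linarith
  have hintegrand : ∀ x ∈ uIoc 0 t,
      (t - x) ^ (c - 1) * x ^ (a - 1) * exp (-x/2) * whittakerM (a + c) b x
        = x ^ (a + b + 1/2 - 1) * (t - x) ^ (c - 1) *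
            hyp1F1 (a + b + 1/2 + c) (1 + 2 * b) (-x) := by
    intro x hx
    rw [uIoc_of_le ht.le] at hx
    have hM := rpow_mul_exp_mul_whittakerM hbeta hx.1 (a - 1) (a + c)
    rw [show a - 1 + b + 1/2 = a + b + 1/2 - 1 by ring,
      show 1/2 + b + (a + c) = a + b + 1/2 + c by ring] at hM
    linear_combination (t - x) ^ (c - 1) * hM
  have hM := rpow_mul_exp_mul_whittakerM hbeta ht (a + c - 1) a
  rw [show a + c - 1 + b + 1/2 = a + b + 1/2 + c - 1 by ring,
    show 1/2 + b + a = a + b + 1/2 by ring] at hM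
  rw [intervalIntegral.integral_congr_ae (ae_of_all _ hintegrand),
    integral_rpow_mul_rpow_sub_mul_hyp1F1_neg hc hd ht,
    show a + b + c + 1/2 = a + b + 1/2 + c by ring]
  linear_combination -(Gamma c * Gamma (a + b + 1/2) / Gamma (a + b + 1/2 + c)) * hM
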